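/- For the reduced expressions u_n = s_{1,1} s_{2,1} ... s_{n,1} and v_n = s_{n,1} s_{n,2} ... s_{n,n-1} of the flip permutation, I₃(S(u_n),S(v_n)) = C(n,3) and I₂,₂(S(u_n),S(v_n)) = 3·C(n,4), hence dist(u_n,v_n) ≥ C(n,3) + 3·C(n,4), which is n⁴/8 + O(n³). -/

import Mathlib

open scoped Classical

noncomputable section

/-- adjacent transposition `s i = (i, i+1)` acting on ℕ (1-indexed positions) -/
def s (i : ℕ) : Equiv.Perm ℕ := Equiv.swap i (i + 1)

/-- permutation represented by a word; letters are applied left to right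
(`wperm (u ++ v) = wperm v * wperm u`, i.e. `u` first, then `v`). -/
def wperm (w : List ℕ) : Equiv.Perm ℕ := ((w.map s).reverse).prod

/-- `w` is an `n`-expression: a word in the letters `s 1, ..., s (n-1)` -/
def IsExpr (n : ℕ) (w : List ℕ) : Prop := ∀ i ∈ w, 1 ≤ i ∧ i + 1 ≤ n

/-- set of inversions of a permutation of `{1,...,n}` -/
def invSet (n : ℕ) (π : Equiv.Perm ℕ) : Finset (ℕ × ℕ) :=
  (Finset.Icc 1 n ×ˢ Finset.Icc 1 n).filter (fun pq => pq.1 < pq.2 ∧ π pq.2 < π pq.1)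

/-- a reduced `n`-expression: its length equals the inversion number of the
permutation it represents -/
def ReducedExpr (n : ℕ) (w : List ℕ) : Prop :=
  IsExpr n w ∧ w.length = (invSet n (wperm w)).card

/-- one application of a braid relation `s i s j s i = s j s i s j`, `|i-j| = 1` -/
inductive StepI : List ℕ → List ℕ → Prop
  | mk (a b : List ℕ) (i j : ℕ) (h : i + 1 = j ∨ j + 1 = i) :
      StepI (a ++ i :: j :: i :: b) (a ++ j :: i :: j :: b)

/-- one application of a commutation relation `s i s j = s j s i`, `|i-j| ≥ 2` -/
inductive StepII : List ℕ → List ℕ → Prop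
  | mk (a b : List ℕ) (i j : ℕ) (h : i + 2 ≤ j ∨ j + 2 ≤ i) :
      StepII (a ++ i :: j :: b) (a ++ j :: i :: b)

def BraidStep (u v : List ℕ) : Prop := StepI u v ∨ StepII u v

/-- `c` is a derivation from `u` to `v` by braid relations -/
def IsDeriv (u v : List ℕ) (c : List (List ℕ)) : Prop :=
  c.Chain' BraidStep ∧ c.head? = some u ∧ c.getLast? = some v

/-- combinatorial distance: minimal number of braid relations transforming `u` into `v` -/
def dist (u v : List ℕ) : ℕ :=
  sInf {k | ∃ c, IsDeriv u v c ∧ c.length = k + 1}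

/-- the word `s_{j,i} = s_{j-1} s_{j-2} ... s_i` (empty if `j ≤ i`) -/
def sji (j i : ℕ) : List ℕ := (List.range (j - i)).map (fun k => j - 1 - k)

/-- the normal word `s_{1,f(1)} s_{2,f(2)} ... s_{n,f(n)}` -/
def normalWord (n : ℕ) (f : ℕ → ℕ) : List ℕ :=
  ((List.range n).map (fun k => sji (k + 1) (f (k + 1)))).flatten

/-- `f : {1,...,n} → {1,...,n}` with `1 ≤ f i ≤ i` for all `i` -/
def IsNormalFun (n : ℕ) (f : ℕ → ℕ) : Prop := ∀ i ∈ Finset.Icc 1 n, 1 ≤ f i ∧ f i ≤ i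

/-- names of the successive crossings: the name of a letter is the pair of starting
positions of the two strands crossing there -/
def namesAux : Equiv.Perm ℕ → List ℕ → List (Finset ℕ)
  | _, [] => []
  | π, i :: rest => ({π⁻¹ i, π⁻¹ (i + 1)} : Finset ℕ) :: namesAux (s i * π) rest

/-- the name sequence `S(w)` of a word -/
def names (w : List ℕ) : List (Finset ℕ) := namesAux 1 w

/-- two entries occur in the same relative order in `S` and `S'` -/
def sameOrder (S S' : List (Finset ℕ)) (a b : Finset ℕ) : Prop :=
  (S.idxOf a < S.idxOf b) ↔ (S'.idxOf a < S'.idxOf b)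

/-- `I₃(S,S')`: number of triples `{p,q,r} ⊆ {1,...,n}` such that the relative order of
the three pairs `{p,q}, {p,r}, {q,r}` is not the same in `S` and `S'` -/
def I3 (n : ℕ) (S S' : List (Finset ℕ)) : ℕ :=
  (((Finset.Icc 1 n).powersetCard 3).filter (fun t =>
    ¬ ∀ a ∈ t.powersetCard 2, ∀ b ∈ t.powersetCard 2, sameOrder S S' a b)).card

/-- `I₂,₂(S,S')`: number of unordered pairs of disjoint pairs in `{1,...,n}` whose
relative order is not the same in `S` and `S'` -/
def I22 (n : ℕ) (S S' : List (Finset ℕ)) : ℕ :=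
  ((((Finset.Icc 1 n).powersetCard 2).powersetCard 2).filter (fun P =>
    (∀ a ∈ P, ∀ b ∈ P, a ≠ b → Disjoint a b) ∧
    ¬ ∀ a ∈ P, ∀ b ∈ P, sameOrder S S' a b)).card

/-- total number of unordered pairs of entries whose relative order differs -/
def InvCount (S S' : List (Finset ℕ)) : ℕ :=
  ((S.toFinset.powersetCard 2).filter (fun P =>
    ¬ ∀ a ∈ P, ∀ b ∈ P, sameOrder S S' a b)).card

/-- number of type I steps in a derivation -/
def countStepsI (c : List (List ℕ)) : ℕ :=
  ((Finset.range (c.length - 1)).filter (fun k => StepI (c.getD k []) (c.getD (k + 1) []))).card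

/-- number of type II steps in a derivation -/
def countStepsII (c : List (List ℕ)) : ℕ :=
  ((Finset.range (c.length - 1)).filter (fun k => StepII (c.getD k []) (c.getD (k + 1) []))).card

/-- position of the strand starting at position `p` after the first `k` letters of `w` -/
def strandPos (w : List ℕ) (p k : ℕ) : ℕ := wperm (w.take k) p

/-- number of unit squares to the right of the `n`-th strand in the braid diagram of `w`,
drawn on an `(n-1) × length w` grid -/
def area (n : ℕ) (w : List ℕ) : ℕ :=
  ((List.range w.length).map (fun k => n - max (strandPos w n k) (strandPos w n (k + 1)))).sum

/-- `u_n = s_{1,1} s_{2,1} ... s_{n,1}` -/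
def uWord (n : ℕ) : List ℕ := ((List.range n).map (fun k => sji (k + 1) 1)).flatten

/-- `v_n = s_{n,1} s_{n,2} ... s_{n,n-1}` -/
def vWord (n : ℕ) : List ℕ := ((List.range (n - 1)).map (fun k => sji n (k + 1))).flatten

/-!
`S(u_n)` lists the pairs `{k, m}`, `1 ≤ k < m ≤ n`, by increasing `m` and then `k`, and `S(v_n)` is
its reverse. Hence every triple and every pair of disjoint pairs is counted, giving `C(n,3)` and
`3·C(n,4)`; the latter because ordered pairs of disjoint pairs number `C(n,2)·C(n-2,2) = 6·C(n,4)`.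

Measured against the fixed sequence `S(v_n)`, `I₃ + I₂,₂` drops by at most one per braid move. A
move of type I reverses the names `{p,q}, {p,r}, {q,r}` of one triple, standing in consecutive
positions, so only that triple changes status; a move of type II swaps two adjacent disjoint names,
so only that pair of pairs changes status. The potential vanishes at `v_n`, and `u_n` is braid
equivalent to `v_n` (push each block `s_{m+1,1}` to the front), so `dist(u_n, v_n)` is the length of
an actual derivation and is bounded below by the potential at `u_n`.
-/

lemma s_apply (i x : ℕ) : s i x = if x = i then i + 1 else if x = i + 1 then i else x := by
  simp [s, Equiv.swap_apply_def]

lemma s_inv (i : ℕ) : (s i)⁻¹ = s i := Equiv.swap_inv _ _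

lemma s_mul_comm {i j : ℕ} (h : i + 2 ≤ j ∨ j + 2 ≤ i) : s i * s j = s j * s i := by
  ext x; simp only [Equiv.Perm.mul_apply, s_apply]; split_ifs <;> omega

lemma s_braid_succ (k : ℕ) : s k * s (k + 1) * s k = s (k + 1) * s k * s (k + 1) := by
  ext x; simp only [Equiv.Perm.mul_apply, s_apply]; split_ifs <;> omega

lemma wperm_cons (i : ℕ) (w : List ℕ) : wperm (i :: w) = wperm w * s i := by simp [wperm]

lemma wperm_append (x y : List ℕ) : wperm (x ++ y) = wperm y * wperm x := by simp [wperm]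

lemma wperm_braid (k : ℕ) : wperm [k, k + 1, k] = wperm [k + 1, k, k + 1] := by
  simpa [wperm, mul_assoc] using s_braid_succ k

lemma namesAux_append (π : Equiv.Perm ℕ) (x y : List ℕ) :
    namesAux π (x ++ y) = namesAux π x ++ namesAux (wperm x * π) y := by
  induction x generalizing π with
  | nil => simp [namesAux, wperm]
  | cons i x ih => simp [namesAux, ih, wperm_cons, mul_assoc]

lemma names_append (a b : List ℕ) : names (a ++ b) = names a ++ namesAux (wperm a) b := by
  simp only [names, namesAux_append, mul_one]

lemma names_append_append (a m b : List ℕ) :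
    names (a ++ m ++ b) = names a ++ namesAux (wperm a) m ++ namesAux (wperm m * wperm a) b := by
  simp only [names_append, wperm_append]

lemma sji_succ_one (m : ℕ) : sji (m + 2) 1 = (m + 1) :: sji (m + 1) 1 := by
  simp only [sji, show m + 2 - 1 = m + 1 by omega, List.range_succ_eq_map, List.map_cons,
    List.map_map]
  congr 1
  exact List.map_congr_left fun k _ => by simp

lemma sji_succ_succ (j i : ℕ) : sji (j + 1) (i + 1) = (sji j i).map (· + 1) := by
  simp only [sji, Nat.add_sub_add_right, List.map_map]
  exact List.map_congr_left fun k hk => by simp at hk ⊢; omega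

lemma le_and_lt_of_mem_sji {j i x : ℕ} (hx : x ∈ sji j i) : i ≤ x ∧ x < j := by
  simp only [sji, List.mem_map, List.mem_range] at hx
  obtain ⟨k, hk, rfl⟩ := hx
  omega

lemma uWord_succ (n : ℕ) : uWord (n + 1) = uWord n ++ sji (n + 1) 1 := by
  simp [uWord, List.range_succ]

lemma vWord_succ (n : ℕ) : vWord (n + 1) = sji (n + 1) 1 ++ (vWord n).map (· + 1) := by
  cases n with
  | zero => rfl
  | succ n =>
    simp only [vWord, Nat.add_sub_cancel, List.range_succ_eq_map, List.map_cons, List.map_map,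
      List.flatten_cons, List.map_flatten]
    congr 2
    exact List.map_congr_left fun k _ => sji_succ_succ _ _

lemma isExpr_uWord (n : ℕ) : IsExpr n (uWord n) := by
  intro x hx
  simp only [uWord, List.mem_flatten, List.mem_map, List.mem_range] at hx
  obtain ⟨_, ⟨k, hk, rfl⟩, hx⟩ := hx
  have := le_and_lt_of_mem_sji hx
  omega

lemma isExpr_vWord (n : ℕ) : IsExpr n (vWord n) := by
  intro x hx
  simp only [vWord, List.mem_flatten, List.mem_map, List.mem_range] at hx
  obtain ⟨_, ⟨k, hk, rfl⟩, hx⟩ := hx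
  have := le_and_lt_of_mem_sji hx
  omega

lemma namesAux_commute (π : Equiv.Perm ℕ) {i j : ℕ} (h : i + 2 ≤ j ∨ j + 2 ≤ i) :
    namesAux π [i, j] = [{π⁻¹ i, π⁻¹ (i + 1)}, {π⁻¹ j, π⁻¹ (j + 1)}] := by
  have hj : s i j = j := by rw [s_apply]; split_ifs <;> omega
  have hj' : s i (j + 1) = j + 1 := by rw [s_apply]; split_ifs <;> omega
  simp [namesAux, s_inv, hj, hj']

lemma namesAux_braid (π : Equiv.Perm ℕ) (k : ℕ) :
    namesAux π [k, k + 1, k] =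
      [{π⁻¹ k, π⁻¹ (k + 1)}, {π⁻¹ k, π⁻¹ (k + 2)}, {π⁻¹ (k + 1), π⁻¹ (k + 2)}] ∧
    namesAux π [k + 1, k, k + 1] =
      [{π⁻¹ (k + 1), π⁻¹ (k + 2)}, {π⁻¹ k, π⁻¹ (k + 2)}, {π⁻¹ k, π⁻¹ (k + 1)}] := by
  simp [namesAux, s_inv, s_apply, show k + 1 + 1 = k + 2 from rfl]

lemma mem_powersetCard_two_of_triple {x y z : ℕ} (hxy : x ≠ y) (hxz : x ≠ z) (hyz : y ≠ z) :
    ∀ a ∈ ([{x, y}, {x, z}, {y, z}] : List (Finset ℕ)),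
      a ∈ ({x, y, z} : Finset ℕ).powersetCard 2 := by
  simp only [List.mem_cons, List.not_mem_nil, or_false, Finset.mem_powersetCard]
  rintro a (rfl | rfl | rfl) <;> refine ⟨by intro; simp; tauto, Finset.card_pair ‹_›⟩

lemma names_of_stepI {w w' : List ℕ} (h : StepI w w') :
    ∃ A M M' B, ∃ t : Finset ℕ, t.card = 3 ∧ (∀ a ∈ M, a ∈ t.powersetCard 2) ∧ M'.Perm M ∧
      names w = A ++ M ++ B ∧ names w' = A ++ M' ++ B := by
  obtain ⟨a, b, i, j, hij⟩ := h
  have split : ∀ x y z : ℕ, a ++ x :: y :: z :: b = a ++ [x, y, z] ++ b := by simp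
  simp only [split, names_append_append]
  set π := wperm a
  obtain ⟨k, hk⟩ : ∃ k, (i = k ∧ j = k + 1) ∨ (i = k + 1 ∧ j = k) :=
    hij.elim (fun h => ⟨i, .inl ⟨rfl, h.symm⟩⟩) (fun h => ⟨j, .inr ⟨h.symm, rfl⟩⟩)
  have hπ : ∀ {x y}, x ≠ y → π⁻¹ x ≠ π⁻¹ y := fun h => (π⁻¹).injective.ne h
  have ht := Finset.card_eq_three.2 ⟨π⁻¹ k, π⁻¹ (k + 1), π⁻¹ (k + 2), hπ (by omega),
    hπ (by omega), hπ (by omega), rfl⟩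
  have hsub := mem_powersetCard_two_of_triple (hπ (show k ≠ k + 1 by omega))
    (hπ (show k ≠ k + 2 by omega)) (hπ (show k + 1 ≠ k + 2 by omega))
  obtain ⟨hL, hL'⟩ := namesAux_braid π k
  rcases hk with ⟨rfl, rfl⟩ | ⟨rfl, rfl⟩
  · rw [← wperm_braid, hL, hL']
    exact ⟨_, _, _, _, _, ht, hsub, List.reverse_perm _, rfl, rfl⟩
  · rw [wperm_braid, hL, hL']
    refine ⟨_, _, _, _, _, ht, ?_, (List.reverse_perm _).symm, rfl, rfl⟩
    exact fun x hx => hsub x (List.mem_reverse.1 hx)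

lemma names_of_stepII {w w' : List ℕ} (h : StepII w w') :
    ∃ A B, ∃ t₁ t₂ : Finset ℕ, Disjoint t₁ t₂ ∧
      names w = A ++ [t₁, t₂] ++ B ∧ names w' = A ++ [t₂, t₁] ++ B := by
  obtain ⟨a, b, i, j, hij⟩ := h
  have split : ∀ x y : ℕ, a ++ x :: y :: b = a ++ [x, y] ++ b := by simp
  have hperm : wperm [i, j] = wperm [j, i] := by simpa [wperm] using (s_mul_comm hij).symm
  simp only [split, names_append_append, namesAux_commute _ hij, namesAux_commute _ hij.symm,
    hperm]
  refine ⟨_, _, _, _, ?_, rfl, rfl⟩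
  simp only [Finset.disjoint_insert_left, Finset.disjoint_insert_right,
    Finset.disjoint_singleton, Finset.mem_insert, Finset.mem_singleton, ne_eq,
    (wperm a)⁻¹.injective.eq_iff]
  omega

section IdxOfPerm

variable {α : Type*} [DecidableEq α]

lemma idxOf_lt_idxOf_iff_of_perm {A M M' B : List α} (hM : M'.Perm M)
    (hnd : (A ++ M ++ B).Nodup) {a b : α} (hab : a ∉ M ∨ b ∉ M) :
    (A ++ M ++ B).idxOf a < (A ++ M ++ B).idxOf b ↔
      (A ++ M' ++ B).idxOf a < (A ++ M' ++ B).idxOf b := by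
  have hlen := hM.length_eq
  have outside : ∀ x ∉ M, (A ++ M ++ B).idxOf x = (A ++ M' ++ B).idxOf x ∧
      ((A ++ M ++ B).idxOf x < A.length ∨ A.length + M.length ≤ (A ++ M ++ B).idxOf x) := by
    intro x hx
    have hx' : x ∉ M' := fun h => hx (hM.mem_iff.1 h)
    by_cases hxA : x ∈ A
    · rw [List.append_assoc, List.append_assoc, List.idxOf_append_of_mem hxA,
        List.idxOf_append_of_mem hxA]
      exact ⟨rfl, .inl (List.idxOf_lt_length_iff.2 hxA)⟩
    · rw [List.append_assoc, List.append_assoc, List.idxOf_append_of_notMem hxA,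
        List.idxOf_append_of_notMem hxA, List.idxOf_append_of_notMem hx,
        List.idxOf_append_of_notMem hx', hlen]
      omega
  have inside : ∀ {N : List α}, N.Perm M → ∀ x ∈ M,
      A.length ≤ (A ++ N ++ B).idxOf x ∧ (A ++ N ++ B).idxOf x < A.length + M.length := by
    intro N hN x hx
    have hxA : x ∉ A := fun h => List.disjoint_of_nodup_append
      (List.nodup_append.1 hnd).1 h hx
    have hxN : x ∈ N := hN.mem_iff.2 hx
    rw [List.append_assoc, List.idxOf_append_of_notMem hxA, List.idxOf_append_of_mem hxN,
      ← hN.length_eq]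
    have := List.idxOf_lt_length_iff.2 hxN
    omega
  by_cases ha : a ∈ M <;> by_cases hb : b ∈ M
  · tauto
  · have := inside (List.Perm.refl M) a ha; have := inside hM a ha; have := outside b hb
    omega
  · have := inside (List.Perm.refl M) b hb; have := inside hM b hb; have := outside a ha
    omega
  · rw [(outside a ha).1, (outside b hb).1]

end IdxOfPerm

lemma sameOrder_append_perm_iff {A M M' B : List (Finset ℕ)} (hM : M'.Perm M)
    (hnd : (A ++ M ++ B).Nodup) (T : List (Finset ℕ)) {a b : Finset ℕ}
    (hab : a ∈ M → b ∈ M → a = b) :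
    sameOrder (A ++ M ++ B) T a b ↔ sameOrder (A ++ M' ++ B) T a b := by
  by_cases h : a = b
  · subst h; simp [sameOrder]
  · unfold sameOrder
    rw [idxOf_lt_idxOf_iff_of_perm hM hnd (by tauto)]

lemma Finset.card_filter_le_card_filter_add_card {ι : Type*} {F E : Finset ι} {p q : ι → Prop}
    [DecidablePred p] [DecidablePred q] (h : ∀ x ∈ F, x ∉ E → p x → q x) :
    (F.filter p).card ≤ (F.filter q).card + E.card := by
  refine (Finset.card_le_card fun x hx => ?_).trans (Finset.card_union_le _ _)
  rw [Finset.mem_filter] at hx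
  by_cases hxE : x ∈ E
  · exact Finset.mem_union_right _ hxE
  · exact Finset.mem_union_left _ (Finset.mem_filter.2 ⟨hx.1, h x hx.1 hxE hx.2⟩)

section Discordance

variable (n : ℕ) (T : List (Finset ℕ)) {A M M' B : List (Finset ℕ)}

lemma I3_le_of_perm (hM : M'.Perm M) (hnd : (A ++ M ++ B).Nodup) (E : Finset (Finset ℕ))
    (hE : ∀ t : Finset ℕ, t.card = 3 → t ∉ E →
      ∀ a ∈ t.powersetCard 2, ∀ b ∈ t.powersetCard 2, a ∈ M → b ∈ M → a = b) :
    I3 n (A ++ M ++ B) T ≤ I3 n (A ++ M' ++ B) T + E.card := by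
  refine Finset.card_filter_le_card_filter_add_card fun t ht htE hS hS' => hS fun a ha b hb => ?_
  exact (sameOrder_append_perm_iff hM hnd T
    (hE t (Finset.mem_powersetCard.1 ht).2 htE a ha b hb)).2 (hS' a ha b hb)

lemma I22_le_of_perm (hM : M'.Perm M) (hnd : (A ++ M ++ B).Nodup) (E : Finset (Finset (Finset ℕ)))
    (hE : ∀ P : Finset (Finset ℕ), P.card = 2 → P ∉ E → (∀ a ∈ P, ∀ b ∈ P, a ≠ b → Disjoint a b) →
      ∀ a ∈ P, ∀ b ∈ P, a ∈ M → b ∈ M → a = b) :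
    I22 n (A ++ M ++ B) T ≤ I22 n (A ++ M' ++ B) T + E.card := by
  refine Finset.card_filter_le_card_filter_add_card fun P hP hPE hS => ⟨hS.1, fun hS' => hS.2 ?_⟩
  intro a ha b hb
  exact (sameOrder_append_perm_iff hM hnd T
    (hE P (Finset.mem_powersetCard.1 hP).2 hPE hS.1 a ha b hb)).2 (hS' a ha b hb)

end Discordance

section TwoSubsets

variable {α : Type*} [DecidableEq α] {a b t : Finset α}

lemma union_eq_of_mem_powersetCard_two (ht : t.card = 3) (ha : a ∈ t.powersetCard 2)
    (hb : b ∈ t.powersetCard 2) (hab : a ≠ b) : a ∪ b = t := by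
  rw [Finset.mem_powersetCard] at ha hb
  have hinter : (a ∩ b).card < 2 := by
    by_contra! h
    exact hab <| (Finset.eq_of_subset_of_card_le Finset.inter_subset_left (by omega)).symm.trans
      (Finset.eq_of_subset_of_card_le Finset.inter_subset_right (by omega))
  have := Finset.card_union_add_card_inter a b
  exact Finset.eq_of_subset_of_card_le (Finset.union_subset ha.1 hb.1) (by omega)

lemma not_disjoint_of_mem_powersetCard_two (ht : t.card = 3) (ha : a ∈ t.powersetCard 2)
    (hb : b ∈ t.powersetCard 2) (hab : a ≠ b) : ¬ Disjoint a b := fun hd => by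
  have := Finset.card_union_of_disjoint hd
  rw [union_eq_of_mem_powersetCard_two ht ha hb hab] at this
  rw [Finset.mem_powersetCard] at ha hb
  omega

end TwoSubsets

section BraidStep

variable (n : ℕ) (T : List (Finset ℕ)) {w w' : List ℕ}

lemma I3_add_I22_le_of_stepI (h : StepI w w') (hnd : (names w).Nodup) :
    I3 n (names w) T + I22 n (names w) T ≤ I3 n (names w') T + I22 n (names w') T + 1 := by
  obtain ⟨A, M, M', B, t, ht, hMt, hM, hw, hw'⟩ := names_of_stepI h
  rw [hw] at hnd
  rw [hw, hw']
  have h3 := I3_le_of_perm n T hM hnd {t} fun t' ht' ht't a ha b hb haM hbM => by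
    by_contra hab
    rw [← union_eq_of_mem_powersetCard_two ht' ha hb hab,
      union_eq_of_mem_powersetCard_two ht (hMt a haM) (hMt b hbM) hab] at ht't
    exact ht't (Finset.mem_singleton_self t)
  have h22 := I22_le_of_perm n T hM hnd ∅ fun P _ _ hP a ha b hb haM hbM => by
    by_contra hab
    exact not_disjoint_of_mem_powersetCard_two ht (hMt a haM) (hMt b hbM) hab (hP a ha b hb hab)
  simp only [Finset.card_singleton, Finset.card_empty] at h3 h22
  omega

lemma I3_add_I22_le_of_stepII (h : StepII w w') (hnd : (names w).Nodup) :
    I3 n (names w) T + I22 n (names w) T ≤ I3 n (names w') T + I22 n (names w') T + 1 := by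
  obtain ⟨A, B, t₁, t₂, hdisj, hw, hw'⟩ := names_of_stepII h
  rw [hw] at hnd
  rw [hw, hw']
  have hM : [t₂, t₁].Perm [t₁, t₂] := List.Perm.swap t₁ t₂ []
  have hdisj' : ∀ a ∈ [t₁, t₂], ∀ b ∈ [t₁, t₂], a ≠ b → Disjoint a b := by
    simp only [List.mem_cons, List.not_mem_nil, or_false]
    rintro a (rfl | rfl) b (rfl | rfl) hab
    exacts [absurd rfl hab, hdisj, hdisj.symm, absurd rfl hab]
  have h3 := I3_le_of_perm n T hM hnd ∅ fun t ht _ a ha b hb haM hbM => by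
    by_contra hab
    exact not_disjoint_of_mem_powersetCard_two ht ha hb hab (hdisj' a haM b hbM hab)
  have h22 := I22_le_of_perm n T hM hnd {{t₁, t₂}} fun P hP hPE _ a ha b hb haM hbM => by
    by_contra hab
    refine hPE (Finset.mem_singleton.2 ?_)
    have hPab : {a, b} = P := Finset.eq_of_subset_of_card_le
      (by simp [Finset.insert_subset_iff, ha, hb]) (by rw [hP, Finset.card_pair hab])
    simp only [List.mem_cons, List.not_mem_nil, or_false] at haM hbM
    rcases haM with rfl | rfl <;> rcases hbM with rfl | rfl <;>
      first | exact absurd rfl hab | exact hPab.symm | exact hPab.symm.trans (Finset.pair_comm _ _)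
  simp only [Finset.card_singleton, Finset.card_empty] at h3 h22
  omega

lemma names_perm_of_braidStep (h : BraidStep w w') : (names w').Perm (names w) := by
  rcases h with h | h
  · obtain ⟨A, M, M', B, -, -, -, hM, hw, hw'⟩ := names_of_stepI h
    rw [hw, hw']
    exact (hM.append_left A).append_right B
  · obtain ⟨A, B, t₁, t₂, -, hw, hw'⟩ := names_of_stepII h
    rw [hw, hw']
    exact ((List.Perm.swap t₁ t₂ []).append_left A).append_right B

lemma I3_add_I22_le_of_braidStep (h : BraidStep w w') (hnd : (names w).Nodup) :
    I3 n (names w) T + I22 n (names w) T ≤ I3 n (names w') T + I22 n (names w') T + 1 :=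
  h.elim (I3_add_I22_le_of_stepI n T · hnd) (I3_add_I22_le_of_stepII n T · hnd)

end BraidStep

lemma le_add_length_of_isChain {α : Type*} {r : α → α → Prop} {P : α → Prop} (Φ : α → ℕ)
    (hr : ∀ x y, r x y → P x → P y ∧ Φ x ≤ Φ y + 1) {c : List α} (hc : c.IsChain r) {x z : α}
    (hx : c.head? = some x) (hz : c.getLast? = some z) (hPx : P x) :
    Φ x ≤ Φ z + (c.length - 1) := by
  induction c generalizing x with
  | nil => simp at hx
  | cons y c ih =>
    obtain rfl : y = x := by simpa using hx
    cases c with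
    | nil =>
      obtain rfl : y = z := by simpa using hz
      simp
    | cons y' c =>
      rw [List.isChain_cons_cons] at hc
      obtain ⟨hPy', hle⟩ := hr y y' hc.1 hPx
      have := ih hc.2 rfl (by simpa using hz) hPy'
      simp only [List.length_cons] at this ⊢
      omega

abbrev BraidEquiv : List ℕ → List ℕ → Prop := Relation.ReflTransGen BraidStep

lemma le_add_dist {u v : List ℕ} (huv : BraidEquiv u v)
    {P : List ℕ → Prop} (Φ : List ℕ → ℕ) (hr : ∀ x y, BraidStep x y → P x → P y ∧ Φ x ≤ Φ y + 1)
    (hu : P u) : Φ u ≤ Φ v + dist u v := by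
  -- `dist` is an `sInf`, which is `0` on the empty set: a derivation has to exist.
  have hne : {k | ∃ c, IsDeriv u v c ∧ c.length = k + 1}.Nonempty := by
    obtain ⟨l, hl, hlast⟩ := List.exists_isChain_cons_of_relationReflTransGen huv
    refine ⟨l.length, u :: l, ⟨hl, rfl, ?_⟩, rfl⟩
    rw [List.getLast?_eq_some_getLast (List.cons_ne_nil _ _), hlast]
  obtain ⟨c, ⟨hc, hu', hv'⟩, hlen⟩ := Nat.sInf_mem hne
  have := le_add_length_of_isChain Φ hr hc hu' hv' hu
  rw [hlen, Nat.add_sub_cancel] at this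
  exact this

lemma braidStep_append_append (p q : List ℕ) {x y : List ℕ} (h : BraidStep x y) :
    BraidStep (p ++ x ++ q) (p ++ y ++ q) := by
  rcases h with ⟨a, b, i, j, hij⟩ | ⟨a, b, i, j, hij⟩
  · exact .inl (by simpa using StepI.mk (p ++ a) (b ++ q) i j hij)
  · exact .inr (by simpa using StepII.mk (p ++ a) (b ++ q) i j hij)

lemma braidStep_map_succ {x y : List ℕ} (h : BraidStep x y) :
    BraidStep (x.map (· + 1)) (y.map (· + 1)) := by
  rcases h with ⟨a, b, i, j, hij⟩ | ⟨a, b, i, j, hij⟩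
  · exact .inl (by simpa using StepI.mk (a.map (· + 1)) (b.map (· + 1)) (i + 1) (j + 1) (by omega))
  · exact .inr (by simpa using StepII.mk (a.map (· + 1)) (b.map (· + 1)) (i + 1) (j + 1) (by omega))

namespace BraidEquiv

variable {x y : List ℕ}

lemma append_left (p : List ℕ) (h : BraidEquiv x y) : BraidEquiv (p ++ x) (p ++ y) := by
  simpa using
    Relation.ReflTransGen.lift (p ++ · ++ []) (fun _ _ => braidStep_append_append p []) x y h

lemma append_right (q : List ℕ) (h : BraidEquiv x y) : BraidEquiv (x ++ q) (y ++ q) :=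
  Relation.ReflTransGen.lift ([] ++ · ++ q) (fun _ _ => braidStep_append_append [] q) x y h

lemma map_succ (h : BraidEquiv x y) : BraidEquiv (x.map (· + 1)) (y.map (· + 1)) :=
  Relation.ReflTransGen.lift (List.map (· + 1)) (fun _ _ => braidStep_map_succ) x y h

end BraidEquiv

lemma braidEquiv_cons_of_commute {j : ℕ} {w : List ℕ} (hw : ∀ x ∈ w, x + 2 ≤ j) :
    BraidEquiv (j :: w) (w ++ [j]) := by
  induction w with
  | nil => exact .refl
  | cons x w ih =>
    refine .head (.inr (StepII.mk [] w j x (.inr (hw x (by simp))))) ?_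
    exact (ih fun y hy => hw y (by simp [hy])).append_left [x]

lemma braidEquiv_cons_sji {m i : ℕ} (hi : 1 ≤ i) (him : i + 1 ≤ m) :
    BraidEquiv (i :: sji (m + 1) 1) (sji (m + 1) 1 ++ [i + 1]) := by
  induction m with
  | zero => omega
  | succ m ih =>
    rw [sji_succ_one]
    by_cases hlt : i + 1 ≤ m
    · refine .head (.inr (StepII.mk [] _ i (m + 1) (.inl (by omega)))) ?_
      exact (ih hlt).append_left [m + 1]
    · obtain rfl : i = m := by omega
      obtain ⟨k, rfl⟩ : ∃ k, i = k + 1 := ⟨i - 1, by omega⟩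
      rw [sji_succ_one]
      refine .head (.inl (StepI.mk [] _ (k + 1) (k + 2) (.inl rfl))) ?_
      have hcomm : ∀ x ∈ sji (k + 1) 1, x + 2 ≤ k + 2 := fun x hx => by
        have := le_and_lt_of_mem_sji hx; omega
      exact (braidEquiv_cons_of_commute hcomm).append_left [k + 2, k + 1]

lemma braidEquiv_append_sji {m : ℕ} {w : List ℕ} (hw : IsExpr m w) :
    BraidEquiv (w ++ sji (m + 1) 1) (sji (m + 1) 1 ++ w.map (· + 1)) := by
  induction w with
  | nil => simpa using .refl
  | cons x w ih =>
    have hx := hw x (by simp)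
    have h1 := (ih fun y hy => hw y (by simp [hy])).append_left [x]
    have h2 := (braidEquiv_cons_sji hx.1 hx.2).append_right (w.map (· + 1))
    simpa using h1.trans h2

lemma braidEquiv_uWord_vWord (n : ℕ) : BraidEquiv (uWord n) (vWord n) := by
  induction n with
  | zero => exact .refl
  | succ n ih =>
    rw [uWord_succ, vWord_succ]
    exact (braidEquiv_append_sji (isExpr_uWord n)).trans (ih.map_succ.append_left _)

lemma wperm_sji_apply (m x : ℕ) :
    wperm (sji (m + 1) 1) x = if 1 ≤ x ∧ x ≤ m then x + 1 else if x = m + 1 then 1 else x := by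
  induction m generalizing x with
  | zero => simp only [sji, wperm]; split_ifs <;> simp <;> omega
  | succ m ih =>
    rw [sji_succ_one, wperm_cons, Equiv.Perm.mul_apply, ih, s_apply]
    split_ifs <;> omega

lemma wperm_uWord_apply (n x : ℕ) :
    wperm (uWord n) x = if 1 ≤ x ∧ x ≤ n then n + 1 - x else x := by
  induction n generalizing x with
  | zero => simp only [uWord, wperm]; split_ifs <;> simp; omega
  | succ n ih =>
    rw [uWord_succ, wperm_append, Equiv.Perm.mul_apply, ih, wperm_sji_apply]
    split_ifs <;> omega

lemma namesAux_sji (m : ℕ) (π : Equiv.Perm ℕ) :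
    namesAux π (sji (m + 1) 1) = (List.range m).map fun j => {π⁻¹ (m - j), π⁻¹ (m + 1)} := by
  induction m generalizing π with
  | zero => rfl
  | succ m ih =>
    rw [sji_succ_one, namesAux, ih, List.range_succ_eq_map, List.map_cons, List.map_map]
    congr 1
    refine List.map_congr_left fun j hj => ?_
    have hj : j < m := List.mem_range.1 hj
    have h1 : s (m + 1) (m - j) = m - j := by rw [s_apply]; split_ifs <;> omega
    have h2 : s (m + 1) (m + 1) = m + 2 := by rw [s_apply]; simp
    simp [s_inv, h1, h2, show m + 1 - (j + 1) = m - j by omega]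

lemma namesAux_map_succ (σ : Equiv.Perm ℕ) (w : List ℕ) (ρ : Equiv.Perm ℕ)
    (hσ : ∀ i ∈ w, σ i = i + 1 ∧ σ (i + 1) = i + 2) :
    namesAux (σ * ρ) (w.map (· + 1)) = namesAux ρ w := by
  induction w generalizing ρ with
  | nil => rfl
  | cons i w ih =>
    obtain ⟨h1, h2⟩ := hσ i (by simp)
    have hconj : s (i + 1) * σ = σ * s i := by
      have : σ * s i * σ⁻¹ = s (i + 1) := by rw [s, ← Equiv.swap_apply_apply, h1, h2]; rfl
      rw [← this, inv_mul_cancel_right]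
    have e1 : σ⁻¹ (i + 1) = i := by rw [Equiv.Perm.inv_eq_iff_eq, h1]
    have e2 : σ⁻¹ (i + 1 + 1) = i + 1 := by rw [Equiv.Perm.inv_eq_iff_eq, h2]
    rw [List.map_cons, namesAux, namesAux, ← mul_assoc, hconj, mul_assoc,
      ih _ fun x hx => hσ x (by simp [hx]), mul_inv_rev, Equiv.Perm.mul_apply,
      Equiv.Perm.mul_apply, e1, e2]

def pairList (n : ℕ) : List (Finset ℕ) :=
  ((List.range n).map fun m => (List.range m).map fun k => ({k + 1, m + 1} : Finset ℕ)).flatten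

lemma pairList_succ (n : ℕ) :
    pairList (n + 1) = pairList n ++ (List.range n).map fun k => ({k + 1, n + 1} : Finset ℕ) := by
  simp [pairList, List.range_succ]

lemma subset_Icc_of_mem_pairList {n : ℕ} {a : Finset ℕ} (ha : a ∈ pairList n) :
    a ⊆ Finset.Icc 1 n := by
  simp only [pairList, List.mem_flatten, List.mem_map, List.mem_range] at ha
  obtain ⟨_, ⟨m, hm, rfl⟩, ha⟩ := ha
  obtain ⟨k, hk, rfl⟩ := List.mem_map.1 ha
  have := List.mem_range.1 hk
  intro x hx
  simp only [Finset.mem_insert, Finset.mem_singleton] at hx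
  simp only [Finset.mem_Icc]
  omega

lemma mem_pairList_of_subset_Icc {n : ℕ} {a : Finset ℕ} (hs : a ⊆ Finset.Icc 1 n)
    (hc : a.card = 2) : a ∈ pairList n := by
  obtain ⟨x, y, hxy, rfl⟩ := Finset.card_eq_two.1 hc
  wlog hlt : x < y generalizing x y
  · rw [Finset.pair_comm] at hs ⊢
    exact this y x hxy.symm hs (Finset.card_pair hxy.symm) (by omega)
  have hx := hs (by simp : x ∈ ({x, y} : Finset ℕ))
  have hy := hs (by simp : y ∈ ({x, y} : Finset ℕ))
  simp only [Finset.mem_Icc] at hx hy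
  simp only [pairList, List.mem_flatten, List.mem_map, List.mem_range]
  refine ⟨_, ⟨y - 1, by omega, rfl⟩, List.mem_map.2 ⟨x - 1, List.mem_range.2 (by omega), ?_⟩⟩
  rw [Nat.sub_add_cancel hx.1, Nat.sub_add_cancel (by omega : 1 ≤ y)]

lemma pairList_nodup (n : ℕ) : (pairList n).Nodup := by
  induction n with
  | zero => exact List.nodup_nil
  | succ n ih =>
    rw [pairList_succ, List.nodup_append]
    refine ⟨ih, List.Nodup.map_on (fun k _ k' _ he => ?_) List.nodup_range, ?_⟩
    · have : k + 1 ∈ ({k' + 1, n + 1} : Finset ℕ) := he ▸ Finset.mem_insert_self _ _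
      simp only [Finset.mem_insert, Finset.mem_singleton] at this
      have := List.mem_range.1 ‹k ∈ _›
      omega
    · rintro a ha _ hb rfl
      obtain ⟨k, -, rfl⟩ := List.mem_map.1 hb
      have := subset_Icc_of_mem_pairList ha (Finset.mem_insert_of_mem (Finset.mem_singleton_self _))
      simp at this

lemma names_uWord (n : ℕ) : names (uWord n) = pairList n := by
  induction n with
  | zero => rfl
  | succ n ih =>
    rw [uWord_succ, names_append, ih, namesAux_sji, pairList_succ]
    congr 1
    refine List.map_congr_left fun j hj => ?_
    have hj : j < n := List.mem_range.1 hj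
    rw [(Equiv.Perm.inv_eq_iff_eq).2 (show n - j = wperm (uWord n) (j + 1) by
        rw [wperm_uWord_apply]; split_ifs <;> omega),
      (Equiv.Perm.inv_eq_iff_eq).2 (show n + 1 = wperm (uWord n) (n + 1) by
        rw [wperm_uWord_apply]; split_ifs <;> omega)]

lemma names_vWord (n : ℕ) : names (vWord n) = (pairList n).reverse := by
  induction n with
  | zero => rfl
  | succ n ih =>
    rw [vWord_succ, names_append, pairList_succ, List.reverse_append, ← ih, names, namesAux_sji,
      ← mul_one (wperm _), namesAux_map_succ]
    · rw [← List.map_reverse, List.range_eq_range', List.reverse_range', ← List.range_eq_range',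
        List.map_map]
      congr 1
      refine List.map_congr_left fun j hj => ?_
      have hj : j < n := List.mem_range.1 hj
      simp [show n - 1 - j + 1 = n - j by omega, Finset.pair_comm]
    · intro i hi
      have := isExpr_vWord n i hi
      simp only [wperm_sji_apply]
      constructor <;> split_ifs <;> omega

section IdxOfReverse

variable {α : Type*} [DecidableEq α] {S : List α}

lemma idxOf_reverse (hnd : S.Nodup) {x : α} (hx : x ∈ S) :
    S.reverse.idxOf x = S.length - 1 - S.idxOf x := by
  have hi : S.idxOf x < S.length := List.idxOf_lt_length_iff.2 hx
  have hk : S.length - 1 - S.idxOf x < S.reverse.length := by rw [List.length_reverse]; omega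
  have hget : S.reverse[S.length - 1 - S.idxOf x] = x := by
    rw [List.getElem_reverse]
    simp only [show S.length - 1 - (S.length - 1 - S.idxOf x) = S.idxOf x by omega]
    exact List.getElem_idxOf hi
  simpa only [hget] using (List.nodup_reverse.2 hnd).idxOf_getElem _ hk

lemma idxOf_lt_idxOf_reverse_iff (hnd : S.Nodup) {a b : α} (ha : a ∈ S) (hb : b ∈ S) :
    S.reverse.idxOf a < S.reverse.idxOf b ↔ S.idxOf b < S.idxOf a := by
  rw [idxOf_reverse hnd ha, idxOf_reverse hnd hb]
  have := List.idxOf_lt_length_iff.2 ha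
  have := List.idxOf_lt_length_iff.2 hb
  omega

end IdxOfReverse

lemma not_sameOrder_reverse {S : List (Finset ℕ)} (hnd : S.Nodup) {a b : Finset ℕ}
    (ha : a ∈ S) (hb : b ∈ S) (hab : a ≠ b) : ¬ sameOrder S S.reverse a b := by
  have hne : S.idxOf a ≠ S.idxOf b := fun h => hab ((List.idxOf_inj ha).1 h)
  rw [sameOrder, idxOf_lt_idxOf_reverse_iff hnd ha hb]
  omega

lemma two_mul_card_filter_powersetCard_two {α : Type*} [DecidableEq α] (s : Finset α)
    (r : α → α → Prop) (hsymm : ∀ a b, r a b → r b a)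
    (hirr : ∀ a ∈ s, ¬ r a a) :
    2 * ((s.powersetCard 2).filter fun P => ∀ a ∈ P, ∀ b ∈ P, a ≠ b → r a b).card =
      ((s ×ˢ s).filter fun x => r x.1 x.2).card := by
  set F := (s.powersetCard 2).filter fun P => ∀ a ∈ P, ∀ b ∈ P, a ≠ b → r a b
  have pair_mem : ∀ a ∈ s, ∀ b ∈ s, r a b → ({a, b} : Finset α) ∈ F := by
    intro a ha b hb hab
    have hne : a ≠ b := by rintro rfl; exact hirr a ha hab
    simp only [F, Finset.mem_filter]
    refine ⟨Finset.mem_powersetCard.2 ⟨?_, Finset.card_pair hne⟩, ?_⟩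
    · simp [Finset.insert_subset_iff, ha, hb]
    simp only [Finset.mem_insert, Finset.mem_singleton]
    rintro x (rfl | rfl) y (rfl | rfl) hxy
    exacts [absurd rfl hxy, hab, hsymm _ _ hab, absurd rfl hxy]
  symm
  rw [Finset.card_eq_sum_card_fiberwise (f := fun x => ({x.1, x.2} : Finset α)) fun x hx => by
      rw [Finset.mem_coe, Finset.mem_filter, Finset.mem_product] at hx
      exact pair_mem _ hx.1.1 _ hx.1.2 hx.2,
    Finset.sum_const_nat (m := 2), mul_comm]
  intro P hP
  simp only [F, Finset.mem_filter, Finset.mem_powersetCard] at hP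
  obtain ⟨a, b, hab, rfl⟩ := Finset.card_eq_two.1 hP.1.2
  rw [Finset.card_eq_two]
  refine ⟨(a, b), (b, a), by simp [hab], Finset.ext fun x => ?_⟩
  have ha : a ∈ s := hP.1.1 (by simp)
  have hb : b ∈ s := hP.1.1 (by simp)
  have hr : r a b := hP.2 a (by simp) b (by simp) hab
  simp only [Finset.mem_filter, Finset.mem_product, ← Finset.coe_inj, Finset.coe_pair,
    Set.pair_eq_pair_iff, Finset.mem_insert, Finset.mem_singleton, Prod.ext_iff]
  constructor
  · exact fun h => h.2
  · rintro (⟨rfl, rfl⟩ | ⟨rfl, rfl⟩)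
    exacts [⟨⟨⟨ha, hb⟩, hr⟩, .inl ⟨rfl, rfl⟩⟩, ⟨⟨⟨hb, ha⟩, hsymm _ _ hr⟩, .inr ⟨rfl, rfl⟩⟩]

lemma card_pairs_of_disjoint_pairs {α : Type*} [DecidableEq α] (s : Finset α) :
    (((s.powersetCard 2).powersetCard 2).filter fun P =>
      ∀ a ∈ P, ∀ b ∈ P, a ≠ b → Disjoint a b).card = 3 * s.card.choose 4 := by
  have hirr : ∀ a ∈ s.powersetCard 2, ¬ Disjoint a a := fun a ha h => by
    obtain rfl := disjoint_self.1 h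
    simp at ha
  have hordered : ((s.powersetCard 2 ×ˢ s.powersetCard 2).filter fun x => Disjoint x.1 x.2).card =
      s.card.choose 2 * (s.card - 2).choose 2 := by
    rw [Finset.card_filter, Finset.sum_product, Finset.sum_const_nat (m := (s.card - 2).choose 2),
      Finset.card_powersetCard]
    intro a ha
    rw [Finset.mem_powersetCard] at ha
    rw [← Finset.card_filter, ← ha.2, ← Finset.card_sdiff_of_subset ha.1,
      ← Finset.card_powersetCard]
    congr 1
    ext b
    simp only [Finset.mem_filter, Finset.mem_powersetCard, Finset.subset_sdiff, disjoint_comm]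
    tauto
  have hchoose : s.card.choose 4 * 6 = s.card.choose 2 * (s.card - 2).choose 2 :=
    Nat.choose_mul (k := 4) (s := 2) (by norm_num)
  have hdouble : 2 * (((s.powersetCard 2).powersetCard 2).filter fun P =>
      ∀ a ∈ P, ∀ b ∈ P, a ≠ b → Disjoint a b).card = s.card.choose 2 * (s.card - 2).choose 2 := by
    rw [← hordered]
    convert two_mul_card_filter_powersetCard_two _ _ (fun _ _ h => h.symm) hirr
  omega

lemma I3_self (n : ℕ) (S : List (Finset ℕ)) : I3 n S S = 0 := by
  simp [I3, sameOrder]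

lemma I22_self (n : ℕ) (S : List (Finset ℕ)) : I22 n S S = 0 := by
  simp [I22, sameOrder]

section Reversal

variable (n : ℕ) {S : List (Finset ℕ)}

lemma I3_reverse (hnd : S.Nodup) (hS : ∀ a ⊆ Finset.Icc 1 n, a.card = 2 → a ∈ S) :
    I3 n S S.reverse = n.choose 3 := by
  rw [I3, Finset.filter_true_of_mem, Finset.card_powersetCard, Nat.card_Icc, Nat.add_sub_cancel]
  intro t ht hsame
  rw [Finset.mem_powersetCard] at ht
  obtain ⟨a, ha, b, hb, hab⟩ : ∃ a ∈ t.powersetCard 2, ∃ b ∈ t.powersetCard 2, a ≠ b :=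
    Finset.one_lt_card.1 (by rw [Finset.card_powersetCard, ht.2]; decide)
  have mem : ∀ c ∈ t.powersetCard 2, c ∈ S := fun c hc =>
    hS c ((Finset.mem_powersetCard.1 hc).1.trans ht.1) (Finset.mem_powersetCard.1 hc).2
  exact not_sameOrder_reverse hnd (mem a ha) (mem b hb) hab (hsame a ha b hb)

lemma I22_reverse (hnd : S.Nodup) (hS : ∀ a ⊆ Finset.Icc 1 n, a.card = 2 → a ∈ S) :
    I22 n S S.reverse = 3 * n.choose 4 := by
  have discordant : ∀ P ∈ ((Finset.Icc 1 n).powersetCard 2).powersetCard 2,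
      ¬ ∀ a ∈ P, ∀ b ∈ P, sameOrder S S.reverse a b := by
    intro P hP hsame
    simp only [Finset.mem_powersetCard] at hP
    obtain ⟨a, b, hab, rfl⟩ := Finset.card_eq_two.1 hP.2
    have mem : ∀ c ∈ ({a, b} : Finset (Finset ℕ)), c ∈ S := fun c hc =>
      hS c (Finset.mem_powersetCard.1 (hP.1 hc)).1 (Finset.mem_powersetCard.1 (hP.1 hc)).2
    exact not_sameOrder_reverse hnd (mem a (by simp)) (mem b (by simp)) hab
      (hsame a (by simp) b (by simp))
  rw [I22, Finset.filter_congr fun P hP => and_iff_left_of_imp fun _ => discordant P hP]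
  convert card_pairs_of_disjoint_pairs (Finset.Icc 1 n) using 2
  rw [Nat.card_Icc, Nat.add_sub_cancel]

end Reversal

/-- For the flip expressions `u_n`, `v_n`: `I₃ = C(n,3)`, `I₂,₂ = 3·C(n,4)`, hence
`dist(u_n, v_n) ≥ C(n,3) + 3·C(n,4)` (which is `n⁴/8 + O(n³)`). -/
theorem flip_distance_lower_bound (n : ℕ) :
    I3 n (names (uWord n)) (names (vWord n)) = n.choose 3 ∧
    I22 n (names (uWord n)) (names (vWord n)) = 3 * n.choose 4 ∧
    dist (uWord n) (vWord n) ≥ n.choose 3 + 3 * n.choose 4 := by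
  have hnd : (names (uWord n)).Nodup := names_uWord n ▸ pairList_nodup n
  have hS : ∀ a ⊆ Finset.Icc 1 n, a.card = 2 → a ∈ names (uWord n) :=
    fun a ha hc => names_uWord n ▸ mem_pairList_of_subset_Icc ha hc
  have hv : names (vWord n) = (names (uWord n)).reverse := by rw [names_uWord, names_vWord]
  have h3 : I3 n (names (uWord n)) (names (vWord n)) = n.choose 3 := hv ▸ I3_reverse n hnd hS
  have h22 : I22 n (names (uWord n)) (names (vWord n)) = 3 * n.choose 4 :=
    hv ▸ I22_reverse n hnd hS
  refine ⟨h3, h22, ?_⟩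
  have := le_add_dist (braidEquiv_uWord_vWord n) (P := fun w => (names w).Nodup)
    (fun w => I3 n (names w) (names (vWord n)) + I22 n (names w) (names (vWord n)))
    (fun _ _ h hnd => ⟨(names_perm_of_braidStep h).nodup_iff.2 hnd,
      I3_add_I22_le_of_braidStep n _ h hnd⟩) hnd
  rw [h3, h22, I3_self, I22_self] at this
  omega
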